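/- Let V be a finite-dimensional ℂ-vector space carrying a Q-deformed sl₂-current representation, and suppose v ∈ V satisfies X⁺_t v = 0 and J_t v = u_t·v for all t ∈ ℕ (for some scalars u_t ∈ ℂ), X₀^{−(n)} v ≠ 0, and X₀^{−(n+1)} v = 0, for some n ∈ ℕ. Then for all s, t ∈ ℕ: Σ_{w=0}^{n} C(n,w)·(−Q)^w·J_{t+n·s+w}^⟨1⟩ v = Σ_{k=0}^{n−1} (−1)^{n−k+1}·(Σ_{w=0}^{k} C(k,w)·(−Q)^w·J_{t+k·s+w}^⟨1⟩)·J_s^⟨n−k⟩ v, where J_m^⟨1⟩ := J_m − Q·J_{m+1}. -/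

import Mathlib

open Finset
/-- `J_s^⟨p⟩`, defined recursively:
`J_s^⟨0⟩ = 1` and
`J_s^⟨p⟩ = (1/p)·Σ_{z=1}^{p} (−1)^{z−1}·(Σ_{w=0}^{z} C(z,w)·(−Q)^w·J_{z·s+w})·J_s^⟨p−z⟩`. -/
noncomputable def Jbr {A : Type*} [Ring A] [Algebra ℂ A] (Q : ℂ) (J : ℕ → A) (s : ℕ) : ℕ → A
  | 0 => 1
  | p + 1 =>
      ((p : ℂ) + 1)⁻¹ •
        ∑ z ∈ Finset.range (p + 1),
          ((-1 : ℂ) ^ z) •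
            ((∑ w ∈ Finset.range (z + 2),
                (((z + 1).choose w : ℂ) * (-Q) ^ w) • J ((z + 1) * s + w)) *
              Jbr Q J s (p - z))
  termination_by p => p
  decreasing_by omega

/-!
Generating functions in `(Module.End ℂ V)⟦z⟧`. Write `τ` for the shift of the current index and
put `L = ∑ₖ (-z)ᵏ (1 - Qτ)ᵏ X⁻_{ks}`, `Mᵣ = ∑ₖ (-z)ᵏ (1 - Qτ)ᵏ⁺¹ J_{r+ks}`, and let
`E = ∑ₚ J_s^⟨p⟩(u) zᵖ` collect the eigenvalues of the `J_s^⟨p⟩` on `v`. The relations give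
`[X⁺ᵣ, L] = Mᵣ` and `[z M_s, L] = 2 θL` for the Euler operator `θ = z d/dz`, and the recursion
defining `J_s^⟨p⟩` is Newton's identity `θE = z M_s(u) E`. Hence
`z X⁺_s (E L^{k+1}) v = (k + 1) θ(E Lᵏ) v`: each application of `X⁺_s` trades a factor `L` for one
degree. Starting from the constant term `(X⁻₀)^{n+1} v = 0` of `E L^{n+1}`, descending `n` times
shows that the degree-`n` coefficient of `E L` kills `v`; applying `X⁺_t` to it leaves the scalar
identity `∑_{i+j=n} J_s^⟨i⟩(u) (-1)ʲ ((1 - Qτ)ʲ⁺¹ u)_{t+js} = 0`, which is the claim.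
-/

open PowerSeries

section ShiftSum

variable {M : Type*} [AddCommGroup M] [Module ℂ M] (Q : ℂ)

/-- `((1 - Qτ)ˡ a) m`, where `τ` shifts the index by one. -/
noncomputable def shiftSum (a : ℕ → M) (l m : ℕ) : M :=
  ∑ w ∈ range (l + 1), ((l.choose w : ℂ) * (-Q) ^ w) • a (m + w)

@[simp]
lemma shiftSum_zero (a : ℕ → M) (m : ℕ) : shiftSum Q a 0 m = a m := by
  simp [shiftSum]

lemma shiftSum_succ (a : ℕ → M) (l m : ℕ) :
    shiftSum Q a (l + 1) m = shiftSum Q a l m - Q • shiftSum Q a l (m + 1) := by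
  set g : ℕ → M := fun w => ((l.choose w : ℂ) * (-Q) ^ w) • a (m + w)
  have hg : ∑ w ∈ range (l + 1), g (w + 1) + g 0 = shiftSum Q a l m := by
    rw [← sum_range_succ', sum_range_succ]
    simp [g, shiftSum]
  have hpascal : ∀ w, (((l + 1).choose (w + 1) : ℂ) * (-Q) ^ (w + 1)) • a (m + (w + 1)) =
      (-Q) • (((l.choose w : ℂ) * (-Q) ^ w) • a (m + 1 + w)) + g (w + 1) := fun w => by
    simp only [g, Nat.choose_succ_succ', Nat.cast_add, add_mul, add_smul, smul_smul,
      add_right_comm m 1 w, add_assoc]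
    congr 2
    ring
  rw [shiftSum, sum_range_succ', Finset.sum_congr rfl fun w _ => hpascal w, sum_add_distrib,
    ← smul_sum, ← hg, shiftSum]
  simp only [g, Nat.choose_zero_right, pow_zero, neg_smul]
  abel

lemma shiftSum_one (a : ℕ → M) (m : ℕ) : shiftSum Q a 1 m = a m - Q • a (m + 1) := by
  rw [shiftSum_succ, shiftSum_zero, shiftSum_zero]

lemma shiftSum_add_right (a : ℕ → M) (l m r : ℕ) :
    shiftSum Q (fun k => a (k + r)) l m = shiftSum Q a l (m + r) := by
  simp only [shiftSum, add_right_comm]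

lemma shiftSum_shiftSum (a : ℕ → M) (z l m : ℕ) :
    shiftSum Q (shiftSum Q a l) z m = shiftSum Q a (z + l) m := by
  induction z generalizing m with
  | zero => simp
  | succ z ih => rw [shiftSum_succ, ih, ih, ← shiftSum_succ, add_right_comm]

lemma map_shiftSum {N : Type*} [AddCommGroup N] [Module ℂ N] (φ : M →ₗ[ℂ] N) (a : ℕ → M)
    (l m : ℕ) : φ (shiftSum Q a l m) = shiftSum Q (fun k => φ (a k)) l m := by
  simp [shiftSum]

lemma sum_choose_smul_sub_eq_shiftSum (a : ℕ → M) (l m : ℕ) :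
    ∑ w ∈ range (l + 1), ((l.choose w : ℂ) * (-Q) ^ w) • (a (m + w) - Q • a (m + w + 1)) =
      shiftSum Q a (l + 1) m := by
  rw [← shiftSum_shiftSum, shiftSum]
  simp only [shiftSum_one]

end ShiftSum

section Commutator

variable {A : Type*} [Ring A] [Algebra ℂ A] (Q : ℂ)

lemma commutator_shiftSum (x : A) (a : ℕ → A) (l m : ℕ) :
    x * shiftSum Q a l m - shiftSum Q a l m * x = shiftSum Q (fun k => x * a k - a k * x) l m :=
  map_shiftSum Q (LinearMap.mulLeft ℂ x - LinearMap.mulRight ℂ x) a l m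

lemma shiftSum_commutator (x : A) (a : ℕ → A) (l m : ℕ) :
    shiftSum Q a l m * x - x * shiftSum Q a l m = shiftSum Q (fun k => a k * x - x * a k) l m :=
  map_shiftSum Q (LinearMap.mulRight ℂ x - LinearMap.mulLeft ℂ x) a l m

lemma shiftSum_smul (c : ℂ) (a : ℕ → A) (l m : ℕ) :
    shiftSum Q (fun k => c • a k) l m = c • shiftSum Q a l m :=
  (map_shiftSum Q (c • LinearMap.id) a l m).symm

lemma commute_shiftSum {a : ℕ → A} (h : ∀ i j, Commute (a i) (a j)) (l m l' m' : ℕ) :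
    Commute (shiftSum Q a l m) (shiftSum Q a l' m') :=
  Commute.sum_left _ _ _ fun _ _ => Commute.sum_right _ _ _ fun _ _ =>
    ((h _ _).smul_left _).smul_right _

end Commutator

namespace PowerSeries

variable {R : Type*} [Semiring R]

noncomputable def euler (f : R⟦X⟧) : R⟦X⟧ := mk fun n => n • coeff n f

@[simp]
lemma coeff_euler (f : R⟦X⟧) (n : ℕ) : coeff n (euler f) = n • coeff n f := coeff_mk _ _

lemma euler_mul (f g : R⟦X⟧) : euler (f * g) = euler f * g + f * euler g := by
  ext n
  simp only [coeff_euler, map_add, coeff_mul, Finset.smul_sum, ← Finset.sum_add_distrib]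
  refine Finset.sum_congr rfl fun p hp => ?_
  rw [← mem_antidiagonal.mp hp, add_smul, smul_mul_assoc, mul_smul_comm]

lemma euler_one : euler (1 : R⟦X⟧) = 0 := by
  ext n
  rcases n with _ | n <;> simp

lemma euler_map {S : Type*} [Semiring S] (φ : R →+* S) (f : R⟦X⟧) :
    euler (map φ f) = map φ (euler f) := by
  ext n
  simp

lemma commute_of_coeff {f g : R⟦X⟧} (h : ∀ i j, Commute (coeff i f) (coeff j g)) :
    Commute f g := by
  ext n
  rw [coeff_mul, coeff_mul, ← Finset.Nat.sum_antidiagonal_swap]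
  exact Finset.sum_congr rfl fun p _ => (h p.2 p.1).eq

lemma euler_pow_mul_self {f : R⟦X⟧} (hf : Commute f (euler f)) (k : ℕ) :
    euler (f ^ k) * f = k • (f ^ k * euler f) := by
  induction k with
  | zero => simp [euler_one]
  | succ k ih =>
    rw [pow_succ, euler_mul, add_mul, ih, smul_mul_assoc, mul_assoc, ← hf.eq, ← mul_assoc,
      succ_nsmul]

lemma mul_pow_succ_of_commutator {b L N : R⟦X⟧} (hb : b * L = L * b + N)
    (hN : N * L = L * N + (2 : ℕ) • euler L) (hL : Commute L (euler L)) (k : ℕ) :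
    b * L ^ (k + 1) = L ^ (k + 1) * b + (k + 1) • (L ^ k * N + euler (L ^ k)) := by
  induction k with
  | zero => simp [hb, euler_one]
  | succ k ih =>
    rw [pow_succ L (k + 1), ← mul_assoc, ih, add_mul, mul_assoc, hb, smul_mul_assoc, add_mul,
      mul_assoc, hN, euler_pow_mul_self hL, pow_succ L k, euler_mul, euler_pow_mul_self hL]
    simp only [mul_add, mul_assoc, mul_smul_comm, smul_add, smul_smul]
    module

section Apply

variable {M : Type*} [AddCommMonoid M] [Module R M]

lemma coeff_mul_apply_congr {f g g' : (Module.End R M)⟦X⟧} {v : M}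
    (h : ∀ n, coeff n g v = coeff n g' v) (n : ℕ) :
    coeff n (f * g) v = coeff n (f * g') v := by
  simp only [coeff_mul, LinearMap.sum_apply, Module.End.mul_apply, h]

lemma coeff_C_apply_of_apply_eq_zero {a : Module.End R M} {v : M} (h : a v = 0)
    (n : ℕ) : coeff n (C a) v = coeff n (0 : (Module.End R M)⟦X⟧) v := by
  rw [coeff_C]
  split_ifs <;> simp [h]

end Apply

end PowerSeries

section Series

variable {A : Type*} [Ring A] [Algebra ℂ A] (Q : ℂ) (s : ℕ)

noncomputable def loweringSeries (a : ℕ → A) : A⟦X⟧ :=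
  mk fun k => (-1 : ℂ) ^ k • shiftSum Q a k (k * s)

noncomputable def cartanSeries (a : ℕ → A) (r : ℕ) : A⟦X⟧ :=
  mk fun k => (-1 : ℂ) ^ k • shiftSum Q a (k + 1) (r + k * s)

lemma Jbr_succ (a : ℕ → A) (p : ℕ) :
    Jbr Q a s (p + 1) = ((p : ℂ) + 1)⁻¹ • ∑ z ∈ range (p + 1),
      (-1 : ℂ) ^ z • (shiftSum Q a (z + 1) ((z + 1) * s) * Jbr Q a s (p - z)) := by
  rw [Jbr]
  rfl

lemma commute_map_algebraMap (f : ℂ⟦X⟧) (g : A⟦X⟧) : Commute (map (algebraMap ℂ A) f) g :=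
  commute_of_coeff fun i j => by
    rw [coeff_map]
    exact Algebra.commutes _ _

end Series

noncomputable def newtonSeries (Q : ℂ) (u : ℕ → ℂ) (s : ℕ) : ℂ⟦X⟧ := mk (Jbr Q u s)

lemma euler_newtonSeries (Q : ℂ) (u : ℕ → ℂ) (s : ℕ) :
    euler (newtonSeries Q u s) = X * cartanSeries Q s u s * newtonSeries Q u s := by
  ext n
  rcases n with _ | n
  · simp [mul_assoc]
  rw [coeff_euler, mul_assoc, coeff_succ_X_mul, coeff_mul, newtonSeries, coeff_mk, Jbr_succ,
    nsmul_eq_mul, smul_eq_mul, ← mul_assoc, Nat.cast_succ,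
    mul_inv_cancel₀ (Nat.cast_add_one_ne_zero n), one_mul,
    Finset.Nat.sum_antidiagonal_eq_sum_range_succ
      (fun i j => coeff i (cartanSeries Q s u s) * coeff j (mk (Jbr Q u s)))]
  refine Finset.sum_congr rfl fun z _ => ?_
  simp [cartanSeries, add_one_mul, add_comm, mul_assoc]

section CurrentRepresentation

variable {V : Type*} [AddCommGroup V] [Module ℂ V] (Q : ℂ) (s : ℕ) {Xp Xm J : ℕ → Module.End ℂ V}

lemma Xp_mul_shiftSum_Xm
    (hL3 : ∀ s t, Xp t * Xm s - Xm s * Xp t = J (s + t) - Q • J (s + t + 1)) (r l m : ℕ) :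
    Xp r * shiftSum Q Xm l m = shiftSum Q Xm l m * Xp r + shiftSum Q J (l + 1) (r + m) := by
  rw [← sub_eq_iff_eq_add', commutator_shiftSum]
  simp only [hL3, ← shiftSum_one]
  rw [shiftSum_add_right Q (shiftSum Q J 1), shiftSum_shiftSum, add_comm m r]

lemma shiftSum_J_commutator_shiftSum_Xm
    (hL2m : ∀ s t, J s * Xm t - Xm t * J s = -((2 : ℂ) • Xm (s + t))) (z m l r : ℕ) :
    shiftSum Q J z m * shiftSum Q Xm l r - shiftSum Q Xm l r * shiftSum Q J z m =
      -((2 : ℂ) • shiftSum Q Xm (l + z) (m + r)) := by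
  have hJ : ∀ k, J k * shiftSum Q Xm l r - shiftSum Q Xm l r * J k =
      (-2 : ℂ) • shiftSum Q Xm l (k + r) := fun k => by
    simp only [commutator_shiftSum, hL2m, ← neg_smul, shiftSum_smul]
    simp only [shiftSum, add_assoc]
  simp only [shiftSum_commutator, hJ, shiftSum_smul, ← neg_smul]
  rw [shiftSum_add_right Q (shiftSum Q Xm l), shiftSum_shiftSum, add_comm z l]

lemma C_mul_loweringSeries
    (hL3 : ∀ s t, Xp t * Xm s - Xm s * Xp t = J (s + t) - Q • J (s + t + 1)) (r : ℕ) :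
    C (Xp r) * loweringSeries Q s Xm =
      loweringSeries Q s Xm * C (Xp r) + cartanSeries Q s J r := by
  ext k
  simp [loweringSeries, cartanSeries, Xp_mul_shiftSum_Xm Q hL3]

lemma X_mul_C_mul_loweringSeries
    (hL3 : ∀ s t, Xp t * Xm s - Xm s * Xp t = J (s + t) - Q • J (s + t + 1)) (r : ℕ) :
    X * C (Xp r) * loweringSeries Q s Xm =
      loweringSeries Q s Xm * (X * C (Xp r)) + X * cartanSeries Q s J r := by
  rw [mul_assoc, C_mul_loweringSeries Q s hL3, mul_add, ← mul_assoc X, ← (commute_X _).eq,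
    mul_assoc]

lemma X_mul_cartanSeries_mul_loweringSeries
    (hL2m : ∀ s t, J s * Xm t - Xm t * J s = -((2 : ℂ) • Xm (s + t))) :
    X * cartanSeries Q s J s * loweringSeries Q s Xm =
      loweringSeries Q s Xm * (X * cartanSeries Q s J s) +
        (2 : ℕ) • euler (loweringSeries Q s Xm) := by
  rw [← sub_eq_iff_eq_add', mul_assoc, ← mul_assoc (loweringSeries Q s Xm), (commute_X _).eq,
    mul_assoc, ← mul_sub]
  refine PowerSeries.ext fun n => ?_
  rcases n with _ | n
  · rw [coeff_zero_X_mul, map_nsmul, coeff_euler, zero_smul, smul_zero]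
  rw [coeff_succ_X_mul, map_sub, coeff_mul, coeff_mul, ← Finset.Nat.sum_antidiagonal_swap,
    ← Finset.sum_sub_distrib]
  have hterm : ∀ p ∈ antidiagonal n,
      coeff p.swap.1 (cartanSeries Q s J s) * coeff p.swap.2 (loweringSeries Q s Xm) -
        coeff p.1 (loweringSeries Q s Xm) * coeff p.2 (cartanSeries Q s J s) =
      (2 : ℕ) • coeff (n + 1) (loweringSeries Q s Xm) := fun p hp => by
    obtain ⟨i, j⟩ := p
    rw [HasAntidiagonal.mem_antidiagonal] at hp
    subst hp
    simp only [Prod.swap, cartanSeries, loweringSeries, coeff_mk, smul_mul_smul_comm]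
    rw [mul_comm ((-1 : ℂ) ^ j), ← smul_sub, shiftSum_J_commutator_shiftSum_Xm Q hL2m,
      show s + j * s + i * s = (i + j + 1) * s by ring, ← add_assoc, smul_neg, smul_smul,
      ← ofNat_smul_eq_nsmul ℂ 2, smul_smul, ← neg_smul]
    congr 1
    ring
  rw [Finset.sum_congr rfl hterm, Finset.sum_const, Finset.Nat.card_antidiagonal, map_nsmul,
    coeff_euler, smul_comm]

lemma commute_loweringSeries_euler (hL4m : ∀ s t, Xm t * Xm s = Xm s * Xm t) :
    Commute (loweringSeries Q s Xm) (euler (loweringSeries Q s Xm)) := by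
  refine commute_of_coeff fun i j => ?_
  simp only [loweringSeries, coeff_euler, coeff_mk]
  exact (((commute_shiftSum Q (fun i j => hL4m j i) _ _ _ _).smul_left _).smul_right _).smul_right _

end CurrentRepresentation

section HighestWeight

variable {V : Type*} [AddCommGroup V] [Module ℂ V] (Q : ℂ) (s : ℕ) {J : ℕ → Module.End ℂ V}
  {v : V} {u : ℕ → ℂ}

lemma shiftSum_apply_of_eigen (hJv : ∀ t, J t v = u t • v) (l m : ℕ) :
    shiftSum Q J l m v = shiftSum Q u l m • v := by
  simp [shiftSum, hJv, Finset.sum_smul, smul_smul]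

lemma Jbr_apply_of_eigen (hJv : ∀ t, J t v = u t • v) (p : ℕ) :
    Jbr Q J s p v = Jbr Q u s p • v := by
  induction p using Nat.strong_induction_on with
  | _ p ih =>
    rcases p with _ | p
    · simp [Jbr]
    rw [Jbr_succ, Jbr_succ]
    simp only [LinearMap.smul_apply, LinearMap.sum_apply, Module.End.mul_apply,
      ih _ (Nat.lt_succ_of_le (Nat.sub_le _ _)), map_smul, shiftSum_apply_of_eigen Q hJv,
      smul_smul, ← Finset.sum_smul, smul_eq_mul, mul_comm]

lemma coeff_cartanSeries_apply_of_eigen (hJv : ∀ t, J t v = u t • v) (r n : ℕ) :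
    coeff n (cartanSeries Q s J r) v =
      coeff n (map (algebraMap ℂ (Module.End ℂ V)) (cartanSeries Q s u r)) v := by
  rw [coeff_map, Module.algebraMap_end_apply]
  simp [cartanSeries, shiftSum_apply_of_eigen Q hJv, smul_smul]

end HighestWeight

section Descent

variable {V : Type*} [AddCommGroup V] [Module ℂ V] (Q : ℂ) (s : ℕ)
  {Xp Xm J : ℕ → Module.End ℂ V} {v : V} {u : ℕ → ℂ}

lemma Xp_coeff_newton_mul_lowering_pow_apply
    (hL2m : ∀ s t, J s * Xm t - Xm t * J s = -((2 : ℂ) • Xm (s + t)))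
    (hL3 : ∀ s t, Xp t * Xm s - Xm s * Xp t = J (s + t) - Q • J (s + t + 1))
    (hL4m : ∀ s t, Xm t * Xm s = Xm s * Xm t)
    (hXv : ∀ t, Xp t v = 0) (hJv : ∀ t, J t v = u t • v) (k p : ℕ) :
    Xp s (coeff p (map (algebraMap ℂ (Module.End ℂ V)) (newtonSeries Q u s) *
        loweringSeries Q s Xm ^ (k + 1)) v) =
      ((k + 1) * (p + 1)) •
        coeff (p + 1) (map (algebraMap ℂ (Module.End ℂ V)) (newtonSeries Q u s) *
          loweringSeries Q s Xm ^ k) v := by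
  set ι := map (algebraMap ℂ (Module.End ℂ V))
  set E := ι (newtonSeries Q u s)
  set L := loweringSeries Q s Xm
  set P := X * ι (cartanSeries Q s u s)
  set b : (Module.End ℂ V)⟦X⟧ := X * C (Xp s)
  set N := X * cartanSeries Q s J s
  have hbv : ∀ n, coeff n b v = coeff n (0 : (Module.End ℂ V)⟦X⟧) v := by
    rintro (_ | n)
    · simp [b]
    · rw [coeff_succ_X_mul]
      exact coeff_C_apply_of_apply_eq_zero (hXv s) n
  have hNv : ∀ n, coeff n N v = coeff n P v := by
    rintro (_ | n)
    · simp [N, P]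
    · rw [coeff_succ_X_mul, coeff_succ_X_mul]
      exact coeff_cartanSeries_apply_of_eigen Q s hJv s n
  have hP : ∀ g, Commute P g := fun g =>
    (commute_X g).symm.mul_left (commute_map_algebraMap _ g)
  have hnewton : euler E = P * E := by
    simp only [E, P, ι, euler_map, euler_newtonSeries, map_mul, map_X]
  calc Xp s (coeff p (E * L ^ (k + 1)) v) = coeff (p + 1) (E * (b * L ^ (k + 1))) v := by
        rw [← mul_assoc, (commute_map_algebraMap _ b).eq, mul_assoc, mul_assoc,
          coeff_succ_X_mul, coeff_C_mul, Module.End.mul_apply]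
    _ = coeff (p + 1) (E * L ^ (k + 1) * b + (k + 1) • (E * L ^ k * N + E * euler (L ^ k))) v := by
        rw [mul_pow_succ_of_commutator (X_mul_C_mul_loweringSeries Q s hL3 s)
          (X_mul_cartanSeries_mul_loweringSeries Q s hL2m)
          (commute_loweringSeries_euler Q s hL4m), mul_add, mul_smul_comm, mul_add, mul_assoc,
          mul_assoc]
    _ = coeff (p + 1) ((k + 1) • (E * L ^ k * P + E * euler (L ^ k))) v := by
        simp only [map_add, map_nsmul, LinearMap.add_apply, LinearMap.smul_apply,
          coeff_mul_apply_congr hbv, coeff_mul_apply_congr hNv, mul_zero, map_zero,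
          LinearMap.zero_apply, zero_add]
    _ = coeff (p + 1) ((k + 1) • euler (E * L ^ k)) v := by
        rw [euler_mul, hnewton, mul_assoc E, ← (hP (L ^ k)).eq, ← mul_assoc, (hP E).eq]
    _ = ((k + 1) * (p + 1)) • coeff (p + 1) (E * L ^ k) v := by
        rw [map_nsmul, coeff_euler, LinearMap.smul_apply, LinearMap.smul_apply, smul_smul]

lemma coeff_newton_mul_lowering_apply_eq_zero
    (hL2m : ∀ s t, J s * Xm t - Xm t * J s = -((2 : ℂ) • Xm (s + t)))
    (hL3 : ∀ s t, Xp t * Xm s - Xm s * Xp t = J (s + t) - Q • J (s + t + 1))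
    (hL4m : ∀ s t, Xm t * Xm s = Xm s * Xm t)
    (hXv : ∀ t, Xp t v = 0) (hJv : ∀ t, J t v = u t • v) {n : ℕ} (hn : (Xm 0 ^ (n + 1)) v = 0) :
    coeff n (map (algebraMap ℂ (Module.End ℂ V)) (newtonSeries Q u s) * loweringSeries Q s Xm) v
      = 0 := by
  set E := map (algebraMap ℂ (Module.End ℂ V)) (newtonSeries Q u s)
  have hdescent : ∀ p ≤ n, coeff p (E * loweringSeries Q s Xm ^ (n + 1 - p)) v = 0 := by
    intro p hp
    induction p with
    | zero =>
      rw [Nat.sub_zero, coeff_zero_eq_constantCoeff_apply, map_mul, map_pow,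
        ← coeff_zero_eq_constantCoeff_apply, ← coeff_zero_eq_constantCoeff_apply]
      simpa [E, newtonSeries, loweringSeries, Jbr] using hn
    | succ p ih =>
      have h := Xp_coeff_newton_mul_lowering_pow_apply Q s hL2m hL3 hL4m hXv hJv (n - p) p
      rw [show n - p + 1 = n + 1 - p by omega, ih (by omega), map_zero, eq_comm,
        ← Nat.cast_smul_eq_nsmul ℂ, smul_eq_zero] at h
      rw [show n + 1 - (p + 1) = n - p by omega]
      exact h.resolve_left (Nat.cast_ne_zero.mpr (mul_ne_zero (by omega) (by omega)))
  simpa using hdescent n le_rfl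

lemma coeff_newton_mul_cartan_smul_eq_zero
    (hL3 : ∀ s t, Xp t * Xm s - Xm s * Xp t = J (s + t) - Q • J (s + t + 1))
    (hXv : ∀ t, Xp t v = 0) (hJv : ∀ t, J t v = u t • v) {n : ℕ}
    (hn : coeff n (map (algebraMap ℂ (Module.End ℂ V)) (newtonSeries Q u s) *
      loweringSeries Q s Xm) v = 0) (t : ℕ) :
    coeff n (newtonSeries Q u s * cartanSeries Q s u t) • v = 0 := by
  set E := map (algebraMap ℂ (Module.End ℂ V)) (newtonSeries Q u s)
  set L := loweringSeries Q s Xm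
  have hXt : coeff n (E * L * C (Xp t)) v = 0 := by
    rw [coeff_mul_apply_congr (coeff_C_apply_of_apply_eq_zero (hXv t)), mul_zero, map_zero,
      LinearMap.zero_apply]
  calc coeff n (newtonSeries Q u s * cartanSeries Q s u t) • v
      = coeff n (E * map (algebraMap ℂ (Module.End ℂ V)) (cartanSeries Q s u t)) v := by
        rw [← map_mul, coeff_map, Module.algebraMap_end_apply]
    _ = coeff n (E * cartanSeries Q s J t) v :=
        (coeff_mul_apply_congr (coeff_cartanSeries_apply_of_eigen Q s hJv t) n).symm
    _ = Xp t (coeff n (E * L) v) - coeff n (E * L * C (Xp t)) v := by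
        rw [← sub_eq_iff_eq_add'.mpr (C_mul_loweringSeries Q s hL3 t), mul_sub, ← mul_assoc,
          (commute_map_algebraMap _ (C (Xp t))).eq, mul_assoc, ← mul_assoc E, map_sub,
          LinearMap.sub_apply, coeff_C_mul, Module.End.mul_apply]
    _ = 0 := by rw [hn, hXt, map_zero, sub_zero]

end Descent

lemma sub_sum_neg_one_pow_eq_neg_one_pow_mul {K : Type*} [CommRing K] (c e : ℕ → K) (hc : c 0 = 1)
    (n : ℕ) :
    e n - ∑ k ∈ range n, (-1) ^ (n - k + 1) * (c (n - k) * e k) =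
      (-1) ^ n * ∑ p ∈ antidiagonal n, c p.1 * ((-1) ^ p.2 * e p.2) := by
  have hsq : ∀ k, ((-1 : K) ^ k) * (-1) ^ k = 1 := fun k => by
    rw [← mul_pow, neg_one_mul, neg_neg, one_pow]
  have hsign : ∀ k ∈ range n, (-1 : K) ^ (n - k + 1) * (c (n - k) * e k) =
      -((-1) ^ n * (c (n - k) * ((-1) ^ k * e k))) := fun k hk => by
    obtain ⟨d, rfl⟩ := Nat.exists_eq_add_of_le (mem_range.mp hk).le
    rw [Nat.add_sub_cancel_left, pow_add, pow_add]
    linear_combination (-1 : K) ^ d * e k * c d * (hsq k)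
  rw [← Finset.Nat.sum_antidiagonal_swap]
  simp only [Prod.fst_swap, Prod.snd_swap]
  rw [Finset.Nat.sum_antidiagonal_eq_sum_range_succ (fun i j => c j * ((-1) ^ i * e i)),
    sum_range_succ, mul_add, mul_sum, Nat.sub_self, hc, sum_congr rfl hsign, sum_neg_distrib]
  linear_combination (-e n) * hsq n

theorem stmt7 {V : Type*} [AddCommGroup V] [Module ℂ V]
    (Q : ℂ) (Xp Xm J : ℕ → Module.End ℂ V)
    (hL2m : ∀ s t, J s * Xm t - Xm t * J s = -((2 : ℂ) • Xm (s + t)))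
    (hL3 : ∀ s t, Xp t * Xm s - Xm s * Xp t = J (s + t) - Q • J (s + t + 1))
    (hL4m : ∀ s t, Xm t * Xm s = Xm s * Xm t)
    (v : V) (u : ℕ → ℂ) (n : ℕ)
    (hXv : ∀ t, Xp t v = 0)
    (hJv : ∀ t, J t v = u t • v)
    (hn2 : ((((n + 1).factorial : ℂ))⁻¹ • (Xm 0) ^ (n + 1)) v = 0)
    (s t : ℕ) :
    (∑ w ∈ Finset.range (n + 1),
        ((n.choose w : ℂ) * (-Q) ^ w) •
          (J (t + n * s + w) - Q • J (t + n * s + w + 1))) v =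
      (∑ k ∈ Finset.range n,
        ((-1 : ℂ) ^ (n - k + 1)) •
          ((∑ w ∈ Finset.range (k + 1),
              ((k.choose w : ℂ) * (-Q) ^ w) •
                (J (t + k * s + w) - Q • J (t + k * s + w + 1))) *
            Jbr Q J s (n - k))) v := by
  rw [LinearMap.smul_apply, smul_eq_zero] at hn2
  have hvanish := coeff_newton_mul_lowering_apply_eq_zero Q s hL2m hL3 hL4m hXv hJv
    (hn2.resolve_left (inv_ne_zero (Nat.cast_ne_zero.mpr (Nat.factorial_ne_zero _))))
  have hzero := coeff_newton_mul_cartan_smul_eq_zero Q s hL3 hXv hJv hvanish t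
  simp only [sum_choose_smul_sub_eq_shiftSum, LinearMap.sum_apply, LinearMap.smul_apply,
    Module.End.mul_apply, Jbr_apply_of_eigen Q s hJv, map_smul, shiftSum_apply_of_eigen Q hJv,
    smul_smul, ← Finset.sum_smul]
  rw [coeff_mul] at hzero
  simp only [newtonSeries, cartanSeries, coeff_mk, smul_eq_mul] at hzero
  have hscalar := sub_sum_neg_one_pow_eq_neg_one_pow_mul (Jbr Q u s)
    (fun k => shiftSum Q u (k + 1) (t + k * s)) (by simp [Jbr]) n
  rw [← sub_eq_zero, ← sub_smul, hscalar, mul_smul, hzero, smul_zero]
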